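/- arXiv:2010.01536 — 10 statements merged into one kernel-verified Lean document; each statement's English description precedes it below -/
import Mathlib

section
/- Fitting preserves the balancing property: if M, N : I×I → ℝ are balanced means, then the function F defined by F(x,y) = M(x,y) if x ≤ y and F(x,y) = N(x,y) if x > y is a balanced mean on I. -/
/-!
On the half-plane `x ≤ y` the fitting `F` coincides with `M`, and the balancing identity of
`M` at a point with `x ≤ y` evaluates `M` only at points `(a, b)` with `a ≤ b`: for `u = M x y`
one has `M x u ≤ u ≤ M u y`. Hence `F` inherits the identity there. The half-plane `y ≤ x` is
the same argument for `N` in the reversed order; on the diagonal both means are the identity,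
so the choice made there by `F` is irrelevant.
-/

open Set

def IsBalancedOn {β : Type*} (I : Set β) (M : β → β → β) : Prop :=
  ∀ x ∈ I, ∀ y ∈ I, M (M x (M x y)) (M (M x y) y) = M x y

variable {α : Type*} [LinearOrder α]

def IsMeanOn (I : Set α) (M : α → α → α) : Prop :=
  ∀ x ∈ I, ∀ y ∈ I, min x y ≤ M x y ∧ M x y ≤ max x y

variable {I : Set α} {M F : α → α → α} {x y : α}

namespace IsMeanOn

theorem apply_self (hM : IsMeanOn I M) (hx : x ∈ I) : M x x = x := by
  have h := hM x hx x hx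
  rw [min_self, max_self] at h
  exact le_antisymm h.2 h.1

theorem mem_Icc (hM : IsMeanOn I M) (hx : x ∈ I) (hy : y ∈ I) (hxy : x ≤ y) :
    M x y ∈ Icc x y := by
  simpa [hxy] using hM x hx y hy

theorem apply_mem [I.OrdConnected] (hM : IsMeanOn I M) (hx : x ∈ I) (hy : y ∈ I)
    (hxy : x ≤ y) : M x y ∈ I :=
  OrdConnected.out ‹_› hx hy (hM.mem_Icc hx hy hxy)

theorem dual (hM : IsMeanOn I M) : IsMeanOn (α := αᵒᵈ) (OrderDual.ofDual ⁻¹' I) M :=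
  fun x hx y hy => (hM x hx y hy).symm

end IsMeanOn

theorem IsBalancedOn.apply_of_eqOn_le [I.OrdConnected] (hMm : IsMeanOn I M)
    (hMb : IsBalancedOn I M) (hF : ∀ a ∈ I, ∀ b ∈ I, a ≤ b → F a b = M a b)
    (hx : x ∈ I) (hy : y ∈ I) (hxy : x ≤ y) :
    F (F x (F x y)) (F (F x y) y) = F x y := by
  obtain ⟨hxu, huy⟩ := hMm.mem_Icc hx hy hxy
  have hu : M x y ∈ I := hMm.apply_mem hx hy hxy
  obtain ⟨-, hxu_u⟩ := hMm.mem_Icc hx hu hxu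
  obtain ⟨hu_uy, -⟩ := hMm.mem_Icc hu hy huy
  rw [hF x hx y hy hxy, hF x hx _ hu hxu, hF _ hu y hy huy,
    hF _ (hMm.apply_mem hx hu hxu) _ (hMm.apply_mem hu hy huy) (hxu_u.trans hu_uy)]
  exact hMb x hx y hy

theorem fitting_preserves_balanced_general (I : Set ℝ) (hIc : I.OrdConnected)
    (M N : ℝ → ℝ → ℝ)
    (hMmean : ∀ x ∈ I, ∀ y ∈ I, min x y ≤ M x y ∧ M x y ≤ max x y)
    (hNmean : ∀ x ∈ I, ∀ y ∈ I, min x y ≤ N x y ∧ N x y ≤ max x y)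
    (hMbal : ∀ x ∈ I, ∀ y ∈ I, M (M x (M x y)) (M (M x y) y) = M x y)
    (hNbal : ∀ x ∈ I, ∀ y ∈ I, N (N x (N x y)) (N (N x y) y) = N x y)
    (F : ℝ → ℝ → ℝ) (hF : ∀ x y : ℝ, F x y = if x ≤ y then M x y else N x y) :
    (∀ x ∈ I, ∀ y ∈ I, min x y ≤ F x y ∧ F x y ≤ max x y) ∧
    (∀ x ∈ I, ∀ y ∈ I, F (F x (F x y)) (F (F x y) y) = F x y) := by
  have hFM : ∀ a ∈ I, ∀ b ∈ I, a ≤ b → F a b = M a b := fun a _ b _ hab => by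
    rw [hF, if_pos hab]
  have hFN : ∀ a ∈ I, ∀ b ∈ I, b ≤ a → F a b = N a b := fun a ha b _ hba => by
    rcases hba.eq_or_lt with rfl | hba
    · rw [hF, if_pos le_rfl, IsMeanOn.apply_self hMmean ha, IsMeanOn.apply_self hNmean ha]
    · rw [hF, if_neg hba.not_ge]
  refine ⟨fun x hx y hy => ?_, fun x hx y hy => ?_⟩
  · rw [hF]
    split_ifs
    exacts [hMmean x hx y hy, hNmean x hx y hy]
  · rcases le_total x y with hxy | hyx
    · exact IsBalancedOn.apply_of_eqOn_le hMmean hMbal hFM hx hy hxy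
    · exact IsBalancedOn.apply_of_eqOn_le (α := ℝᵒᵈ) (IsMeanOn.dual hNmean) hNbal hFN
        hx hy hyx

/-- Fitting of means preserves the balancing property. -/
theorem fitting_preserves_balanced (I : Set ℝ) (hI : IsOpen I) (hIc : I.OrdConnected)
    (M N : ℝ → ℝ → ℝ)
    (hMmean : ∀ x ∈ I, ∀ y ∈ I, min x y ≤ M x y ∧ M x y ≤ max x y)
    (hNmean : ∀ x ∈ I, ∀ y ∈ I, min x y ≤ N x y ∧ N x y ≤ max x y)
    (hMbal : ∀ x ∈ I, ∀ y ∈ I, M (M x (M x y)) (M (M x y) y) = M x y)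
    (hNbal : ∀ x ∈ I, ∀ y ∈ I, N (N x (N x y)) (N (N x y) y) = N x y)
    (F : ℝ → ℝ → ℝ) (hF : ∀ x y : ℝ, F x y = if x ≤ y then M x y else N x y) :
    (∀ x ∈ I, ∀ y ∈ I, min x y ≤ F x y ∧ F x y ≤ max x y) ∧
    (∀ x ∈ I, ∀ y ∈ I, F (F x (F x y)) (F (F x y) y) = F x y) :=
  fitting_preserves_balanced_general I hIc M N hMmean hNmean hMbal hNbal F hF
end

section
/- The discontinuous function M : ℝ×ℝ → ℝ defined by M(x,y) = y if both x,y ∈ ℚ and M(x,y) = x otherwise, is a mean and is balanced. -/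
/-!
`M(x, y)` is always one of its two arguments. Any such selective operation lies between
`min` and `max`, and is automatically balanced: if `u = M(x, y) = x` then both inner means
are `M(x, x) = x`, and if `u = y` they are both `M(y, y) = y`.
-/

section Selective

variable {α : Type*} {M : α → α → α}

theorem selective_idem (hM : ∀ x y, M x y = x ∨ M x y = y) (x : α) : M x x = x :=
  (hM x x).elim id id

theorem selective_left_self (hM : ∀ x y, M x y = x ∨ M x y = y) (x y : α) :
    M x (M x y) = M x y := by
  rcases hM x y with h | h
  · rw [h, selective_idem hM]
  · rw [h, h]

theorem selective_self_right (hM : ∀ x y, M x y = x ∨ M x y = y) (x y : α) :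
    M (M x y) y = M x y := by
  rcases hM x y with h | h
  · rw [h, h]
  · rw [h, selective_idem hM]

theorem selective_balanced (hM : ∀ x y, M x y = x ∨ M x y = y) (x y : α) :
    M (M x (M x y)) (M (M x y) y) = M x y := by
  rw [selective_left_self hM, selective_self_right hM, selective_idem hM]

theorem selective_mem_Icc [LinearOrder α] (hM : ∀ x y, M x y = x ∨ M x y = y) (x y : α) :
    min x y ≤ M x y ∧ M x y ≤ max x y := by
  rcases hM x y with h | h <;> rw [h]
  · exact ⟨min_le_left x y, le_max_left x y⟩
  · exact ⟨min_le_right x y, le_max_right x y⟩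

end Selective

open Classical in
/-- The everywhere-discontinuous function `M(x,y) = y` if `x, y ∈ ℚ`, `M(x,y) = x`
otherwise, is a balanced mean on `ℝ`. -/
theorem rational_switch_mean_balanced (M : ℝ → ℝ → ℝ)
    (hM : ∀ x y : ℝ,
      M x y = if (∃ p : ℚ, (p : ℝ) = x) ∧ (∃ q : ℚ, (q : ℝ) = y) then y else x) :
    (∀ x y : ℝ, min x y ≤ M x y ∧ M x y ≤ max x y) ∧
    (∀ x y : ℝ, M (M x (M x y)) (M (M x y) y) = M x y) := by
  have selective : ∀ x y, M x y = x ∨ M x y = y := by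
    intro x y
    rw [hM]
    split_ifs
    · exact Or.inr rfl
    · exact Or.inl rfl
  exact ⟨selective_mem_Icc selective, selective_balanced selective⟩
end

section
/- Let A, B ⊆ ℝ₊ be disjoint nonempty sets with A ∪ B = ℝ₊. Define M : ℝ₊×ℝ₊ → ℝ by M(x,y) = y if x/y ∈ A and M(x,y) = x if x/y ∈ B. Then M is a balanced mean and M is positively homogeneous: M(tx, ty) = t·M(x,y) for all t, x, y > 0. -/
section Selective

variable {α : Type*} {M : α → α → α}

theorem balanced_of_eq_or_eq (hsel : ∀ x y, M x y = x ∨ M x y = y) (x y : α) :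
    M (M x (M x y)) (M (M x y) y) = M x y := by
  have hidem (z : α) : M z z = z := (hsel z z).elim id id
  rcases hsel x y with hx | hy
  · rw [hx, hidem, hx, hidem]
  · rw [hy, hidem, hy, hidem]

theorem min_le_and_le_max_of_eq_or_eq [LinearOrder α] {a x y : α} (h : a = x ∨ a = y) :
    min x y ≤ a ∧ a ≤ max x y := by
  rcases h with rfl | rfl
  · exact ⟨min_le_left _ _, le_max_left _ _⟩
  · exact ⟨min_le_right _ _, le_max_right _ _⟩

end Selective

open Classical in
theorem homogeneous_switch_mean_balanced_general (A : Set ℝ)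
    (M : ℝ → ℝ → ℝ)
    (hM : ∀ x y : ℝ, M x y = if x / y ∈ A then y else x) :
    (∀ x y : ℝ, 0 < x → 0 < y → min x y ≤ M x y ∧ M x y ≤ max x y) ∧
    (∀ x y : ℝ, 0 < x → 0 < y → M (M x (M x y)) (M (M x y) y) = M x y) ∧
    (∀ t x y : ℝ, 0 < t → 0 < x → 0 < y → M (t * x) (t * y) = t * M x y) := by
  have hsel (x y : ℝ) : M x y = x ∨ M x y = y := by
    rw [hM]
    exact (ite_eq_or_eq _ _ _).symm
  refine ⟨fun x y _ _ ↦ min_le_and_le_max_of_eq_or_eq (hsel x y),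
    fun x y _ _ ↦ balanced_of_eq_or_eq hsel x y, fun t x y ht _ _ ↦ ?_⟩
  simp only [hM, mul_div_mul_left x y ht.ne', mul_ite]

open Classical in
/-- A discontinuous, positively homogeneous, balanced mean on the positive reals. -/
theorem homogeneous_switch_mean_balanced (A B : Set ℝ)
    (hA : A ⊆ {x : ℝ | 0 < x}) (hB : B ⊆ {x : ℝ | 0 < x})
    (hAne : A.Nonempty) (hBne : B.Nonempty)
    (hdisj : A ∩ B = ∅) (hunion : A ∪ B = {x : ℝ | 0 < x})
    (M : ℝ → ℝ → ℝ)
    (hM : ∀ x y : ℝ, M x y = if x / y ∈ A then y else x) :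
    (∀ x y : ℝ, 0 < x → 0 < y → min x y ≤ M x y ∧ M x y ≤ max x y) ∧
    (∀ x y : ℝ, 0 < x → 0 < y → M (M x (M x y)) (M (M x y) y) = M x y) ∧
    (∀ t x y : ℝ, 0 < t → 0 < x → 0 < y → M (t * x) (t * y) = t * M x y) :=
  homogeneous_switch_mean_balanced_general A M hM
end

section
/- Every Matkowski mean is iteratively quasi-arithmetic with respect to Φ := f+g: if f,g : I → ℝ are continuous strictly increasing and M(x,y) = (f+g)⁻¹(f(x)+g(y)), then for all x,y ∈ I, M(x,y) = (f+g)⁻¹((((f+g)(M(x,M(x,y))) + (f+g)(M(M(x,y),y)))/2)). -/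
/-! With `m = M(x, y)` and `Φ = f + g`, the defining relation `Φ(M(u, v)) = f u + g v` gives
`Φ(M(x, m)) + Φ(M(m, y)) = (f x + g y) + (f m + g m) = 2 Φ(m)`, so the quasi-arithmetic mean
of the two iterates is `Φ⁻¹(Φ(m)) = m`. -/

theorem matkowski_mem_and_add_apply {I : Set ℝ} {f g Finv : ℝ → ℝ}
    (hright : ∀ z ∈ (fun t => f t + g t) '' I, Finv z ∈ I ∧ f (Finv z) + g (Finv z) = z)
    (himg : ∀ x ∈ I, ∀ y ∈ I, f x + g y ∈ (fun t => f t + g t) '' I)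
    {M : ℝ → ℝ → ℝ} (hM : ∀ x y : ℝ, M x y = Finv (f x + g y)) {x y : ℝ}
    (hx : x ∈ I) (hy : y ∈ I) :
    M x y ∈ I ∧ f (M x y) + g (M x y) = f x + g y := by
  rw [hM]
  exact hright _ (himg x hx y hy)

theorem matkowski_add_apply_iterates {I : Set ℝ} {f g Finv : ℝ → ℝ}
    (hright : ∀ z ∈ (fun t => f t + g t) '' I, Finv z ∈ I ∧ f (Finv z) + g (Finv z) = z)
    (himg : ∀ x ∈ I, ∀ y ∈ I, f x + g y ∈ (fun t => f t + g t) '' I)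
    {M : ℝ → ℝ → ℝ} (hM : ∀ x y : ℝ, M x y = Finv (f x + g y)) {x y : ℝ}
    (hx : x ∈ I) (hy : y ∈ I) :
    (f (M x (M x y)) + g (M x (M x y))) + (f (M (M x y) y) + g (M (M x y) y)) =
      2 * (f (M x y) + g (M x y)) := by
  obtain ⟨hmI, hm⟩ := matkowski_mem_and_add_apply hright himg hM hx hy
  rw [(matkowski_mem_and_add_apply hright himg hM hx hmI).2,
    (matkowski_mem_and_add_apply hright himg hM hmI hy).2]
  linarith

theorem matkowski_iteratively_quasiArithmetic_general (I : Set ℝ) (f g Finv : ℝ → ℝ)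
    (hleft : ∀ x ∈ I, Finv (f x + g x) = x)
    (hright : ∀ z ∈ (fun t => f t + g t) '' I,
      Finv z ∈ I ∧ f (Finv z) + g (Finv z) = z)
    (himg : ∀ x ∈ I, ∀ y ∈ I, f x + g y ∈ (fun t => f t + g t) '' I)
    (M : ℝ → ℝ → ℝ) (hM : ∀ x y : ℝ, M x y = Finv (f x + g y)) :
    ∀ x ∈ I, ∀ y ∈ I,
      M x y = Finv (((f (M x (M x y)) + g (M x (M x y))) +
        (f (M (M x y) y) + g (M (M x y) y))) / 2) := by
  intro x hx y hy
  rw [matkowski_add_apply_iterates hright himg hM hx hy, mul_div_cancel_left₀ _ two_ne_zero,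
    hleft _ (matkowski_mem_and_add_apply hright himg hM hx hy).1]

/-- Every Matkowski mean is iteratively quasi-arithmetic w.r.t. `Φ = f + g`. -/
theorem matkowski_iteratively_quasiArithmetic (I : Set ℝ) (hI : IsOpen I)
    (hIne : I.Nonempty) (hIc : I.OrdConnected) (f g Finv : ℝ → ℝ)
    (hfc : ContinuousOn f I) (hgc : ContinuousOn g I)
    (hfm : StrictMonoOn f I) (hgm : StrictMonoOn g I)
    (hleft : ∀ x ∈ I, Finv (f x + g x) = x)
    (hright : ∀ z ∈ (fun t => f t + g t) '' I,
      Finv z ∈ I ∧ f (Finv z) + g (Finv z) = z)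
    (himg : ∀ x ∈ I, ∀ y ∈ I, f x + g y ∈ (fun t => f t + g t) '' I)
    (M : ℝ → ℝ → ℝ) (hM : ∀ x y : ℝ, M x y = Finv (f x + g y)) :
    ∀ x ∈ I, ∀ y ∈ I,
      M x y = Finv (((f (M x (M x y)) + g (M x (M x y))) +
        (f (M (M x y) y) + g (M (M x y) y))) / 2) :=
  matkowski_iteratively_quasiArithmetic_general I f g Finv hleft hright himg M hM
end

section
/- A Matkowski mean M_{f,g} with f,g continuous strictly increasing on I is symmetric (M(x,y) = M(y,x) for all x,y ∈ I) if and only if there is a constant c ∈ ℝ with f = g + c on I. -/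
theorem Set.Nonempty.exists_eq_add_const_iff {α G : Type*} [AddCommGroup G] {s : Set α}
    (hs : s.Nonempty) {f g : α → G} :
    (∃ c, ∀ x ∈ s, f x = g x + c) ↔ ∀ x ∈ s, ∀ y ∈ s, f x + g y = f y + g x := by
  constructor
  · rintro ⟨c, hc⟩ x hx y hy
    rw [hc x hx, hc y hy]
    abel
  · obtain ⟨x₀, hx₀⟩ := hs
    exact fun h => ⟨f x₀ - g x₀, fun x hx =>
      eq_add_of_sub_eq' (sub_eq_sub_iff_add_eq_add.mpr (h x hx x₀ hx₀))⟩

theorem matkowski_symmetric_iff_general (I : Set ℝ) (hIne : I.Nonempty)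
    (f g Finv : ℝ → ℝ)
    (hright : ∀ z ∈ (fun t => f t + g t) '' I,
      Finv z ∈ I ∧ f (Finv z) + g (Finv z) = z)
    (himg : ∀ x ∈ I, ∀ y ∈ I, f x + g y ∈ (fun t => f t + g t) '' I)
    (M : ℝ → ℝ → ℝ) (hM : ∀ x y : ℝ, M x y = Finv (f x + g y)) :
    (∀ x ∈ I, ∀ y ∈ I, M x y = M y x) ↔ (∃ c : ℝ, ∀ x ∈ I, f x = g x + c) := by
  have hinj : Set.InjOn Finv ((fun t => f t + g t) '' I) :=
    Set.LeftInvOn.injOn (f₁' := fun t => f t + g t) fun z hz => (hright z hz).2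
  rw [hIne.exists_eq_add_const_iff]
  refine forall₂_congr fun x hx => forall₂_congr fun y hy => ?_
  rw [hM, hM]
  exact hinj.eq_iff (himg x hx y hy) (himg y hy x hx)

/-- A Matkowski mean is symmetric iff `f = g + c` for some constant `c`. -/
theorem matkowski_symmetric_iff (I : Set ℝ) (hI : IsOpen I) (hIne : I.Nonempty)
    (hIc : I.OrdConnected) (f g Finv : ℝ → ℝ)
    (hfc : ContinuousOn f I) (hgc : ContinuousOn g I)
    (hfm : StrictMonoOn f I) (hgm : StrictMonoOn g I)
    (hleft : ∀ x ∈ I, Finv (f x + g x) = x)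
    (hright : ∀ z ∈ (fun t => f t + g t) '' I,
      Finv z ∈ I ∧ f (Finv z) + g (Finv z) = z)
    (himg : ∀ x ∈ I, ∀ y ∈ I, f x + g y ∈ (fun t => f t + g t) '' I)
    (M : ℝ → ℝ → ℝ) (hM : ∀ x y : ℝ, M x y = Finv (f x + g y)) :
    (∀ x ∈ I, ∀ y ∈ I, M x y = M y x) ↔ (∃ c : ℝ, ∀ x ∈ I, f x = g x + c) :=
  matkowski_symmetric_iff_general I hIne f g Finv hright himg M hM
end

section
/- Let Φ : I → ℝ be continuous strictly monotone and t ∈ (0,1) \ {1/2}. Define the weighted quasi-arithmetic mean A_Φ^t(x,y) = Φ⁻¹(tΦ(x)+(1-t)Φ(y)) and K(x,y) := A_Φ^t(min(x,y), max(x,y)). Then K is iteratively quasi-arithmetic with respect to Φ: K(x,y) = Φ⁻¹((Φ(K(x,u)) + Φ(K(u,y)))/2) where u = K(x,y), for all x,y ∈ I. -/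
/-! Let `x ≤ y`. By the intermediate value theorem `t Φ x + (1 - t) Φ y = Φ w` for some
`w ∈ [x, y]`, and `Φinv` undoes `Φ` on `I`, so `u = K x y = w` lies in `[x, y]` and satisfies
`Φ u = t Φ x + (1 - t) Φ y`. Hence
`Φ (K x u) + Φ (K u y) = t Φ x + Φ u + (1 - t) Φ y = 2 Φ u`. The case `y ≤ x` follows because
`K` is symmetric. -/

open Set

theorem combo_mem_uIcc {s : ℝ} (hs0 : 0 ≤ s) (hs1 : s ≤ 1) (p q : ℝ) :
    s * p + (1 - s) * q ∈ uIcc p q :=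
  segment_subset_uIcc p q ⟨s, 1 - s, hs0, by linarith, by ring, rfl⟩

theorem exists_mem_Icc_apply_eq_combo {f : ℝ → ℝ} {a b s : ℝ} (hab : a ≤ b)
    (hf : ContinuousOn f (Icc a b)) (hs0 : 0 ≤ s) (hs1 : s ≤ 1) :
    ∃ w ∈ Icc a b, f w = s * f a + (1 - s) * f b := by
  rw [← uIcc_of_le hab] at hf ⊢
  exact intermediate_value_uIcc hf (combo_mem_uIcc hs0 hs1 (f a) (f b))

section QuasiArithmeticMean

variable {I : Set ℝ} {Φ Φinv : ℝ → ℝ}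

theorem quasiArithmeticMean_mem_Icc_and_apply_eq (hIc : I.OrdConnected)
    (hΦc : ContinuousOn Φ I) (hleft : ∀ x ∈ I, Φinv (Φ x) = x) {a b s : ℝ}
    (ha : a ∈ I) (hb : b ∈ I) (hab : a ≤ b) (hs0 : 0 ≤ s) (hs1 : s ≤ 1) :
    Φinv (s * Φ a + (1 - s) * Φ b) ∈ Icc a b ∧
      Φ (Φinv (s * Φ a + (1 - s) * Φ b)) = s * Φ a + (1 - s) * Φ b := by
  obtain ⟨w, hw, hΦw⟩ :=
    exists_mem_Icc_apply_eq_combo hab (hΦc.mono (hIc.out ha hb)) hs0 hs1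
  rw [← hΦw, hleft w (hIc.out ha hb hw)]
  exact ⟨hw, rfl⟩

variable {t : ℝ} {K : ℝ → ℝ → ℝ}

theorem symmMean_comm
    (hK : ∀ x y : ℝ, K x y = Φinv (t * Φ (min x y) + (1 - t) * Φ (max x y))) (x y : ℝ) :
    K x y = K y x := by
  rw [hK, hK, min_comm, max_comm]

theorem symmMean_iterate_of_le
    (hK : ∀ x y : ℝ, K x y = Φinv (t * Φ (min x y) + (1 - t) * Φ (max x y)))
    (hIc : I.OrdConnected) (hΦc : ContinuousOn Φ I) (hleft : ∀ x ∈ I, Φinv (Φ x) = x)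
    (ht0 : 0 ≤ t) (ht1 : t ≤ 1) {x y : ℝ} (hx : x ∈ I) (hy : y ∈ I) (hxy : x ≤ y) :
    K x y = Φinv ((Φ (K x (K x y)) + Φ (K (K x y) y)) / 2) := by
  have hK_of_le : ∀ {a b}, a ∈ I → b ∈ I → a ≤ b →
      K a b ∈ Icc a b ∧ Φ (K a b) = t * Φ a + (1 - t) * Φ b := by
    intro a b ha hb hab
    rw [hK, min_eq_left hab, max_eq_right hab]
    exact quasiArithmeticMean_mem_Icc_and_apply_eq hIc hΦc hleft ha hb hab ht0 ht1
  obtain ⟨⟨hxu, huy⟩, hΦu⟩ := hK_of_le hx hy hxy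
  have hu : K x y ∈ I := hIc.out hx hy ⟨hxu, huy⟩
  rw [(hK_of_le hx hu hxu).2, (hK_of_le hu hy huy).2, hΦu]
  conv_lhs => rw [hK, min_eq_left hxy, max_eq_right hxy]
  congr 1
  ring

end QuasiArithmeticMean

theorem weighted_mean_iteratively_quasiArithmetic_general (I : Set ℝ)
    (hIc : I.OrdConnected) (Φ Φinv : ℝ → ℝ)
    (hΦc : ContinuousOn Φ I)
    (hleft : ∀ x ∈ I, Φinv (Φ x) = x)
    (t : ℝ) (ht0 : 0 < t) (ht1 : t < 1)
    (K : ℝ → ℝ → ℝ)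
    (hK : ∀ x y : ℝ,
      K x y = Φinv (t * Φ (min x y) + (1 - t) * Φ (max x y))) :
    ∀ x ∈ I, ∀ y ∈ I,
      K x y = Φinv ((Φ (K x (K x y)) + Φ (K (K x y) y)) / 2) := by
  intro x hx y hy
  rcases le_total x y with hxy | hyx
  · exact symmMean_iterate_of_le hK hIc hΦc hleft ht0.le ht1.le hx hy hxy
  · rw [symmMean_comm hK x y, symmMean_comm hK x (K y x), symmMean_comm hK (K y x) y, add_comm]
    exact symmMean_iterate_of_le hK hIc hΦc hleft ht0.le ht1.le hy hx hyx

/-- The symmetrized weighted quasi-arithmetic mean `K` is iteratively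
quasi-arithmetic with respect to `Φ`. -/
theorem weighted_mean_iteratively_quasiArithmetic (I : Set ℝ) (hI : IsOpen I)
    (hIne : I.Nonempty) (hIc : I.OrdConnected) (Φ Φinv : ℝ → ℝ)
    (hΦc : ContinuousOn Φ I)
    (hΦm : StrictMonoOn Φ I ∨ StrictAntiOn Φ I)
    (hleft : ∀ x ∈ I, Φinv (Φ x) = x)
    (hright : ∀ z ∈ Φ '' I, Φinv z ∈ I ∧ Φ (Φinv z) = z)
    (t : ℝ) (ht0 : 0 < t) (ht1 : t < 1) (ht : t ≠ 1 / 2)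
    (K : ℝ → ℝ → ℝ)
    (hK : ∀ x y : ℝ,
      K x y = Φinv (t * Φ (min x y) + (1 - t) * Φ (max x y))) :
    ∀ x ∈ I, ∀ y ∈ I,
      K x y = Φinv ((Φ (K x (K x y)) + Φ (K (K x y) y)) / 2) :=
  weighted_mean_iteratively_quasiArithmetic_general I hIc Φ Φinv hΦc hleft t ht0 ht1 K hK
end

section
/- The mean K(x,y) = A_Φ^t(min(x,y), max(x,y)) with t ∈ (0,1), t ≠ 1/2, is not bisymmetric: there exist x,y,u,v ∈ I with K(K(x,y),K(u,v)) ≠ K(K(x,u),K(y,v)). -/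
/-!
Take `x < y` in `I` and let `m = K x y`. Since `K m m = m`, the quadruple `(x, m, y, m)` gives
`K (K x y) (K m m) = m`, while `K (K x m) (K y m)` is, in `Φ`-coordinates, `Φ m` shifted by
`t (1 - t) (2t - 1) (Φ x - Φ y)`, which vanishes only for `t = 1/2`. Strict monotonicity of `Φ`
is needed only to know that `K x m < m < K m y`, so that `min`/`max` can be resolved.
-/

open Set

lemma mem_Ioo_of_apply_eq_convex_combination {f : ℝ → ℝ} {s : Set ℝ}
    (hf : StrictMonoOn f s ∨ StrictAntiOn f s) {x y z t : ℝ} (hx : x ∈ s) (hy : y ∈ s)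
    (hz : z ∈ s) (hxy : x < y) (ht0 : 0 < t) (ht1 : t < 1)
    (hfz : f z = t * f x + (1 - t) * f y) : z ∈ Ioo x y := by
  rcases hf with hf | hf
  · have hfxy := hf hx hy hxy
    exact ⟨(hf.lt_iff_lt hx hz).1 (by rw [hfz]; nlinarith),
      (hf.lt_iff_lt hz hy).1 (by rw [hfz]; nlinarith)⟩
  · have hfxy := hf hx hy hxy
    exact ⟨(hf.lt_iff_gt hz hx).1 (by rw [hfz]; nlinarith),
      (hf.lt_iff_gt hy hz).1 (by rw [hfz]; nlinarith)⟩

section MinMaxMean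

variable {I : Set ℝ} {Φ Φinv : ℝ → ℝ} {t : ℝ} {K : ℝ → ℝ → ℝ}

lemma minMaxMean_comm (hK : ∀ x y, K x y = Φinv (t * Φ (min x y) + (1 - t) * Φ (max x y)))
    (x y : ℝ) : K x y = K y x := by
  rw [hK, hK, min_comm, max_comm]

lemma minMaxMean_self (hK : ∀ x y, K x y = Φinv (t * Φ (min x y) + (1 - t) * Φ (max x y)))
    (hleft : LeftInvOn Φinv Φ I) {x : ℝ} (hx : x ∈ I) : K x x = x := by
  rw [hK, min_self, max_self, ← add_mul, add_sub_cancel, one_mul, hleft hx]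

lemma minMaxMean_mem_and_apply_of_le
    (hK : ∀ x y, K x y = Φinv (t * Φ (min x y) + (1 - t) * Φ (max x y)))
    (hright : ∀ z ∈ Φ '' I, Φinv z ∈ I ∧ Φ (Φinv z) = z) (hconv : Convex ℝ (Φ '' I))
    (ht0 : 0 ≤ t) (ht1 : t ≤ 1) {x y : ℝ} (hx : x ∈ I) (hy : y ∈ I) (hxy : x ≤ y) :
    K x y ∈ I ∧ Φ (K x y) = t * Φ x + (1 - t) * Φ y := by
  rw [hK, min_eq_left hxy, max_eq_right hxy]
  exact hright _ (hconv (mem_image_of_mem Φ hx) (mem_image_of_mem Φ hy) ht0 (by linarith)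
    (by ring))

lemma minMaxMean_mem_Ioo (hK : ∀ x y, K x y = Φinv (t * Φ (min x y) + (1 - t) * Φ (max x y)))
    (hright : ∀ z ∈ Φ '' I, Φinv z ∈ I ∧ Φ (Φinv z) = z) (hconv : Convex ℝ (Φ '' I))
    (hΦm : StrictMonoOn Φ I ∨ StrictAntiOn Φ I) (ht0 : 0 < t) (ht1 : t < 1) {x y : ℝ}
    (hx : x ∈ I) (hy : y ∈ I) (hxy : x < y) : K x y ∈ Ioo x y := by
  obtain ⟨hmem, hval⟩ :=
    minMaxMean_mem_and_apply_of_le hK hright hconv ht0.le ht1.le hx hy hxy.le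
  exact mem_Ioo_of_apply_eq_convex_combination hΦm hx hy hmem hxy ht0 ht1 hval

end MinMaxMean

theorem weighted_mean_not_bisymmetric_general (I : Set ℝ)
    (hIc : I.OrdConnected) (a b : ℝ) (ha : a ∈ I) (hb : b ∈ I) (hab : a ≠ b)
    (Φ Φinv : ℝ → ℝ)
    (hΦc : ContinuousOn Φ I)
    (hΦm : StrictMonoOn Φ I ∨ StrictAntiOn Φ I)
    (hleft : ∀ x ∈ I, Φinv (Φ x) = x)
    (hright : ∀ z ∈ Φ '' I, Φinv z ∈ I ∧ Φ (Φinv z) = z)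
    (t : ℝ) (ht0 : 0 < t) (ht1 : t < 1) (ht : t ≠ 1 / 2)
    (K : ℝ → ℝ → ℝ)
    (hK : ∀ x y : ℝ,
      K x y = Φinv (t * Φ (min x y) + (1 - t) * Φ (max x y))) :
    ∃ x ∈ I, ∃ y ∈ I, ∃ u ∈ I, ∃ v ∈ I,
      K (K x y) (K u v) ≠ K (K x u) (K y v) := by
  have hconv : Convex ℝ (Φ '' I) := (hIc.isPreconnected.image Φ hΦc).ordConnected.convex
  have apply_mean {x y : ℝ} (hx : x ∈ I) (hy : y ∈ I) (hxy : x ≤ y) :=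
    minMaxMean_mem_and_apply_of_le hK hright hconv ht0.le ht1.le hx hy hxy
  have mem_Ioo {x y : ℝ} (hx : x ∈ I) (hy : y ∈ I) (hxy : x < y) :=
    minMaxMean_mem_Ioo hK hright hconv hΦm ht0 ht1 hx hy hxy
  obtain ⟨x, hx, y, hy, hxy⟩ : ∃ x ∈ I, ∃ y ∈ I, x < y := by
    rcases hab.lt_or_gt with h | h
    exacts [⟨a, ha, b, hb, h⟩, ⟨b, hb, a, ha, h⟩]
  obtain ⟨hm, hm_val⟩ := apply_mean hx hy hxy.le
  obtain ⟨hxm, hmy⟩ := mem_Ioo hx hy hxy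
  obtain ⟨hc, hc_val⟩ := apply_mean hx hm hxm.le
  obtain ⟨hd, hd_val⟩ := apply_mean hm hy hmy.le
  have hcd : K x (K x y) < K (K x y) y := (mem_Ioo hx hm hxm).2.trans (mem_Ioo hm hy hmy).1
  refine ⟨x, hx, K x y, hm, y, hy, K x y, hm, fun heq => ?_⟩
  have hmm : K (K x y) (K x y) = K x y := minMaxMean_self hK hleft hm
  rw [minMaxMean_comm hK y, hmm, hmm] at heq
  have hdefect : t * (1 - t) * (2 * t - 1) * (Φ x - Φ y) = 0 := by
    have hval := congrArg Φ heq
    rw [(apply_mean hc hd hcd.le).2, hc_val, hd_val, hm_val] at hval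
    linear_combination hval
  have hweight : t * (1 - t) * (2 * t - 1) ≠ 0 :=
    mul_ne_zero (mul_ne_zero ht0.ne' (sub_ne_zero.2 ht1.ne')) fun h => ht (by linarith)
  exact hxy.ne (LeftInvOn.injOn hleft hx hy
    (sub_eq_zero.1 ((mul_eq_zero.1 hdefect).resolve_left hweight)))

/-- The mean `K` with weight `t ≠ 1/2` is not bisymmetric. -/
theorem weighted_mean_not_bisymmetric (I : Set ℝ) (hI : IsOpen I)
    (hIc : I.OrdConnected) (a b : ℝ) (ha : a ∈ I) (hb : b ∈ I) (hab : a ≠ b)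
    (Φ Φinv : ℝ → ℝ)
    (hΦc : ContinuousOn Φ I)
    (hΦm : StrictMonoOn Φ I ∨ StrictAntiOn Φ I)
    (hleft : ∀ x ∈ I, Φinv (Φ x) = x)
    (hright : ∀ z ∈ Φ '' I, Φinv z ∈ I ∧ Φ (Φinv z) = z)
    (t : ℝ) (ht0 : 0 < t) (ht1 : t < 1) (ht : t ≠ 1 / 2)
    (K : ℝ → ℝ → ℝ)
    (hK : ∀ x y : ℝ,
      K x y = Φinv (t * Φ (min x y) + (1 - t) * Φ (max x y))) :
    ∃ x ∈ I, ∃ y ∈ I, ∃ u ∈ I, ∃ v ∈ I,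
      K (K x y) (K u v) ≠ K (K x u) (K y v) :=
  weighted_mean_not_bisymmetric_general I hIc a b ha hb hab Φ Φinv hΦc hΦm hleft hright t ht0 ht1 ht
    K hK
end

section
/- Let L, R : I×I → ℝ be continuous strictly monotone means and fix v ∈ I. Let R_v(t) := R(t,v), L_v(t) := L(t,v), J_v := R_v(I), and ψ_v := L_v ∘ R_v⁻¹ : J_v → ℝ. If R_v < L_v on I ∩ (-∞,v) and R_v > L_v on I ∩ (v,∞), then ψ_v(J_v) ⊆ J_v, ψ_v(v) = v, and for every ξ ∈ J_v with ξ ≠ v, the iterate sequence (ψ_v^[n](ξ))_{n≥0} is strictly monotone and converges to v. -/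
/-!
Write `f = R_v`, `g = L_v`. The order hypotheses put `g t` strictly between `f t` and `v = f v`
for `t ≠ v`, so `ψ_v` maps `J_v` into itself and moves every point strictly towards `v`. Instead of
proving `R_v⁻¹` continuous, lift an orbit to `I`: `t_n := R_v⁻¹ (ψ_v^[n] ξ)` satisfies
`f (t (n + 1)) = g (t n)` and is strictly monotone and bounded by `v`. Its limit `τ` lies in `I`,
continuity of `f` and `g` gives `f τ = g τ`, which forces `τ = v`; hence `ψ_v^[n] ξ = f (t n) → v`.
-/

open Filter Topology Set

/-- The order hypotheses of the theorem, for `f = R_v` and `g = L_v`. -/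
structure AttractingPair (I : Set ℝ) (f g : ℝ → ℝ) (v : ℝ) : Prop where
  mem : v ∈ I
  strictMonoOn_left : StrictMonoOn f I
  strictMonoOn_right : StrictMonoOn g I
  left_apply_self : f v = v
  right_apply_self : g v = v
  lt_of_lt : ∀ t ∈ I, t < v → f t < g t
  lt_of_gt : ∀ t ∈ I, v < t → g t < f t

lemma apply_self_of_mean {I : Set ℝ} {M : ℝ → ℝ → ℝ}
    (hM : ∀ x ∈ I, ∀ y ∈ I, min x y ≤ M x y ∧ M x y ≤ max x y) {v : ℝ} (hv : v ∈ I) :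
    M v v = v := by
  simpa only [min_self, max_self, ← le_antisymm_iff] using (hM v hv v hv).symm

lemma eq_of_tendsto_of_apply_succ {α β : Type*} [TopologicalSpace α] [TopologicalSpace β]
    [T2Space β] {f g : α → β} {s : Set α} {t : ℕ → α} {τ : α}
    (hf : ContinuousWithinAt f s τ) (hg : ContinuousWithinAt g s τ) (ht : ∀ n, t n ∈ s)
    (hlim : Tendsto t atTop (𝓝 τ)) (hrec : ∀ n, f (t (n + 1)) = g (t n)) : f τ = g τ := by
  have hlim' : Tendsto t atTop (𝓝[s] τ) := tendsto_nhdsWithin_iff.2 ⟨hlim, .of_forall ht⟩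
  have hf' := (hf.tendsto.comp hlim').comp (tendsto_add_atTop_nat 1)
  exact tendsto_nhds_unique hf' ((hg.tendsto.comp hlim').congr fun n => (hrec n).symm)

lemma exists_tendsto_of_monotone_of_mem_uIcc {t : ℕ → ℝ} {a b : ℝ}
    (hmono : Monotone t ∨ Antitone t) (hbd : ∀ n, t n ∈ uIcc a b) :
    ∃ τ ∈ uIcc a b, Tendsto t atTop (𝓝 τ) := by
  have hbdd : BddBelow (range t) ∧ BddAbove (range t) :=
    ⟨isCompact_uIcc.bddBelow.mono (range_subset_iff.2 hbd),
      isCompact_uIcc.bddAbove.mono (range_subset_iff.2 hbd)⟩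
  obtain ⟨τ, hlim⟩ : ∃ τ, Tendsto t atTop (𝓝 τ) := hmono.elim
    (fun h => ⟨_, tendsto_atTop_ciSup h hbdd.2⟩) (fun h => ⟨_, tendsto_atTop_ciInf h hbdd.1⟩)
  exact ⟨τ, isCompact_uIcc.isClosed.mem_of_tendsto hlim (.of_forall hbd), hlim⟩

namespace AttractingPair

variable {I : Set ℝ} {f g : ℝ → ℝ} {v : ℝ}

lemma apply_mem_Ioo_of_lt (h : AttractingPair I f g v) {t : ℝ} (ht : t ∈ I) (htv : t < v) :
    g t ∈ Ioo (f t) v :=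
  ⟨h.lt_of_lt t ht htv, h.right_apply_self ▸ h.strictMonoOn_right ht h.mem htv⟩

lemma apply_mem_Ioo_of_gt (h : AttractingPair I f g v) {t : ℝ} (ht : t ∈ I) (hvt : v < t) :
    g t ∈ Ioo v (f t) :=
  ⟨h.right_apply_self ▸ h.strictMonoOn_right h.mem ht hvt, h.lt_of_gt t ht hvt⟩

lemma apply_mem_uIcc (h : AttractingPair I f g v) {t : ℝ} (ht : t ∈ I) :
    g t ∈ uIcc (f t) v := by
  rcases lt_trichotomy t v with htv | rfl | hvt
  · exact Ioo_subset_Icc_self.trans Icc_subset_uIcc (h.apply_mem_Ioo_of_lt ht htv)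
  · simp [h.right_apply_self]
  · exact Ioo_subset_Icc_self.trans Icc_subset_uIcc' (h.apply_mem_Ioo_of_gt ht hvt)

lemma mapsTo_comp_rightInvOn (h : AttractingPair I f g v) {finv : ℝ → ℝ}
    (hJ : (f '' I).OrdConnected) (hfinv : ∀ z ∈ f '' I, finv z ∈ I ∧ f (finv z) = z) :
    MapsTo (g ∘ finv) (f '' I) (f '' I) := fun z hz => by
  obtain ⟨hz', hfz⟩ := hfinv z hz
  have hvJ : v ∈ f '' I := ⟨v, h.mem, h.left_apply_self⟩
  have hmem := h.apply_mem_uIcc hz'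
  rw [hfz] at hmem
  exact hJ.uIcc_subset hz hvJ hmem

lemma eq_of_apply_eq (h : AttractingPair I f g v) {t : ℝ} (ht : t ∈ I) (heq : f t = g t) :
    t = v := by
  by_contra hne
  rcases lt_or_gt_of_ne hne with htv | hvt
  · exact (h.lt_of_lt t ht htv).ne heq
  · exact (h.lt_of_gt t ht hvt).ne heq.symm

lemma mem_Ioo_of_apply_eq_of_lt (h : AttractingPair I f g v) {s t : ℝ} (hs : s ∈ I)
    (ht : t ∈ I) (heq : f s = g t) (htv : t < v) : s ∈ Ioo t v := by
  have hg := h.apply_mem_Ioo_of_lt ht htv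
  rw [← heq] at hg
  exact ⟨(h.strictMonoOn_left.lt_iff_lt ht hs).1 hg.1,
    (h.strictMonoOn_left.lt_iff_lt hs h.mem).1 (hg.2.trans_eq h.left_apply_self.symm)⟩

lemma mem_Ioo_of_apply_eq_of_gt (h : AttractingPair I f g v) {s t : ℝ} (hs : s ∈ I)
    (ht : t ∈ I) (heq : f s = g t) (hvt : v < t) : s ∈ Ioo v t := by
  have hg := h.apply_mem_Ioo_of_gt ht hvt
  rw [← heq] at hg
  exact ⟨(h.strictMonoOn_left.lt_iff_lt h.mem hs).1 (h.left_apply_self.trans_lt hg.1),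
    (h.strictMonoOn_left.lt_iff_lt hs ht).1 hg.2⟩

variable {t : ℕ → ℝ}

lemma strictMono_of_lt (h : AttractingPair I f g v) (ht : ∀ n, t n ∈ I)
    (hrec : ∀ n, f (t (n + 1)) = g (t n)) (h0 : t 0 < v) : StrictMono t ∧ ∀ n, t n < v := by
  have step n (hn : t n < v) := h.mem_Ioo_of_apply_eq_of_lt (ht (n + 1)) (ht n) (hrec n) hn
  have hlt : ∀ n, t n < v := fun n => Nat.rec h0 (fun n ih => (step n ih).2) n
  exact ⟨strictMono_nat_of_lt_succ fun n => (step n (hlt n)).1, hlt⟩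

lemma strictAnti_of_gt (h : AttractingPair I f g v) (ht : ∀ n, t n ∈ I)
    (hrec : ∀ n, f (t (n + 1)) = g (t n)) (h0 : v < t 0) : StrictAnti t ∧ ∀ n, v < t n := by
  have step n (hn : v < t n) := h.mem_Ioo_of_apply_eq_of_gt (ht (n + 1)) (ht n) (hrec n) hn
  have hgt : ∀ n, v < t n := fun n => Nat.rec h0 (fun n ih => (step n ih).1) n
  exact ⟨strictAnti_nat_of_succ_lt fun n => (step n (hgt n)).2, hgt⟩

lemma strictMono_or_strictAnti (h : AttractingPair I f g v) (ht : ∀ n, t n ∈ I)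
    (hrec : ∀ n, f (t (n + 1)) = g (t n)) (h0 : t 0 ≠ v) :
    (StrictMono t ∨ StrictAnti t) ∧ ∀ n, t n ∈ uIcc (t 0) v := by
  rcases lt_or_gt_of_ne h0 with h0 | h0
  · obtain ⟨hmono, hlt⟩ := h.strictMono_of_lt ht hrec h0
    exact ⟨.inl hmono, fun n => Icc_subset_uIcc ⟨hmono.monotone n.zero_le, (hlt n).le⟩⟩
  · obtain ⟨hanti, hgt⟩ := h.strictAnti_of_gt ht hrec h0
    exact ⟨.inr hanti, fun n => Icc_subset_uIcc' ⟨(hgt n).le, hanti.antitone n.zero_le⟩⟩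

lemma tendsto_of_apply_succ (h : AttractingPair I f g v) (hI : I.OrdConnected)
    (hf : ContinuousOn f I) (hg : ContinuousOn g I) (ht : ∀ n, t n ∈ I)
    (hrec : ∀ n, f (t (n + 1)) = g (t n)) (h0 : t 0 ≠ v) :
    (StrictMono (f ∘ t) ∨ StrictAnti (f ∘ t)) ∧ Tendsto (f ∘ t) atTop (𝓝 v) := by
  obtain ⟨hmono, hbd⟩ := h.strictMono_or_strictAnti ht hrec h0
  obtain ⟨τ, hτ, hlim⟩ :=
    exists_tendsto_of_monotone_of_mem_uIcc (hmono.imp StrictMono.monotone StrictAnti.antitone) hbd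
  have hτI : τ ∈ I := hI.uIcc_subset (ht 0) h.mem hτ
  obtain rfl : τ = v :=
    h.eq_of_apply_eq hτI (eq_of_tendsto_of_apply_succ (hf τ hτI) (hg τ hτI) ht hlim hrec)
  refine ⟨hmono.imp (fun hm m n hmn => h.strictMonoOn_left (ht m) (ht n) (hm hmn))
    (fun ha m n hmn => h.strictMonoOn_left (ht n) (ht m) (ha hmn)), ?_⟩
  have hlim' : Tendsto t atTop (𝓝[I] τ) := tendsto_nhdsWithin_iff.2 ⟨hlim, .of_forall ht⟩
  exact h.left_apply_self ▸ (hf τ hτI).tendsto.comp hlim'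

end AttractingPair

theorem psi_orbit_converges_general (I : Set ℝ)
    (hIc : I.OrdConnected) (L R : ℝ → ℝ → ℝ)
    (hLc1 : ∀ y ∈ I, ContinuousOn (fun x => L x y) I)
    (hLm1 : ∀ y ∈ I, StrictMonoOn (fun x => L x y) I)
    (hLmean : ∀ x ∈ I, ∀ y ∈ I, min x y ≤ L x y ∧ L x y ≤ max x y)
    (hRc1 : ∀ y ∈ I, ContinuousOn (fun x => R x y) I)
    (hRm1 : ∀ y ∈ I, StrictMonoOn (fun x => R x y) I)
    (hRmean : ∀ x ∈ I, ∀ y ∈ I, min x y ≤ R x y ∧ R x y ≤ max x y)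
    (v : ℝ) (hv : v ∈ I)
    (hlt : ∀ t ∈ I, t < v → R t v < L t v)
    (hgt : ∀ t ∈ I, v < t → L t v < R t v)
    (Rvinv : ℝ → ℝ)
    (hRvleft : ∀ t ∈ I, Rvinv (R t v) = t)
    (hRvright : ∀ z ∈ (fun t => R t v) '' I,
      Rvinv z ∈ I ∧ R (Rvinv z) v = z)
    (ψ : ℝ → ℝ) (hψ : ∀ z : ℝ, ψ z = L (Rvinv z) v) :
    (∀ z ∈ (fun t => R t v) '' I, ψ z ∈ (fun t => R t v) '' I) ∧
    ψ v = v ∧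
    (∀ ξ ∈ (fun t => R t v) '' I, ξ ≠ v →
      (StrictMono (fun n : ℕ => ψ^[n] ξ) ∨ StrictAnti (fun n : ℕ => ψ^[n] ξ)) ∧
      Tendsto (fun n : ℕ => ψ^[n] ξ) atTop (𝓝 v)) := by
  obtain rfl : ψ = (fun t => L t v) ∘ Rvinv := funext hψ
  have hRvv : R v v = v := apply_self_of_mean hRmean hv
  have h : AttractingPair I (fun t => R t v) (fun t => L t v) v :=
    ⟨hv, hRm1 v hv, hLm1 v hv, hRvv, apply_self_of_mean hLmean hv, hlt, hgt⟩
  have hJ : ((fun t => R t v) '' I).OrdConnected :=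
    (hIc.isPreconnected.image _ (hRc1 v hv)).ordConnected
  have hmaps := h.mapsTo_comp_rightInvOn hJ hRvright
  refine ⟨hmaps, ?_, fun ξ hξ hξv => ?_⟩
  · have hRvinv : Rvinv v = v := by simpa only [hRvv] using hRvleft v hv
    simp only [Function.comp_apply, hRvinv, h.right_apply_self]
  set x : ℕ → ℝ := fun n => ((fun t => L t v) ∘ Rvinv)^[n] ξ
  have hxJ n : x n ∈ (fun t => R t v) '' I := hmaps.iterate n hξ
  have hx : (fun t => R t v) ∘ (Rvinv ∘ x) = x := funext fun n => (hRvright _ (hxJ n)).2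
  have hrec n : R (Rvinv (x (n + 1))) v = L (Rvinv (x n)) v :=
    (hRvright _ (hxJ (n + 1))).2.trans (Function.iterate_succ_apply' _ n ξ)
  have h0 : Rvinv ξ ≠ v := fun heq => hξv (by rw [← (hRvright ξ hξ).2, heq, hRvv])
  have hlift := h.tendsto_of_apply_succ (t := Rvinv ∘ x) hIc (hRc1 v hv) (hLc1 v hv)
    (fun n => (hRvright _ (hxJ n)).1) hrec h0
  rwa [hx] at hlift

/-- Lemma 1: attractivity of the fixed point `v` of `ψ_v = L_v ∘ R_v⁻¹`. -/
theorem psi_orbit_converges (I : Set ℝ) (hI : IsOpen I) (hIne : I.Nonempty)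
    (hIc : I.OrdConnected) (L R : ℝ → ℝ → ℝ)
    (hLc1 : ∀ y ∈ I, ContinuousOn (fun x => L x y) I)
    (hLc2 : ∀ x ∈ I, ContinuousOn (fun y => L x y) I)
    (hLm1 : ∀ y ∈ I, StrictMonoOn (fun x => L x y) I)
    (hLm2 : ∀ x ∈ I, StrictMonoOn (fun y => L x y) I)
    (hLmean : ∀ x ∈ I, ∀ y ∈ I, min x y ≤ L x y ∧ L x y ≤ max x y)
    (hRc1 : ∀ y ∈ I, ContinuousOn (fun x => R x y) I)
    (hRc2 : ∀ x ∈ I, ContinuousOn (fun y => R x y) I)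
    (hRm1 : ∀ y ∈ I, StrictMonoOn (fun x => R x y) I)
    (hRm2 : ∀ x ∈ I, StrictMonoOn (fun y => R x y) I)
    (hRmean : ∀ x ∈ I, ∀ y ∈ I, min x y ≤ R x y ∧ R x y ≤ max x y)
    (v : ℝ) (hv : v ∈ I)
    (hlt : ∀ t ∈ I, t < v → R t v < L t v)
    (hgt : ∀ t ∈ I, v < t → L t v < R t v)
    (Rvinv : ℝ → ℝ)
    (hRvleft : ∀ t ∈ I, Rvinv (R t v) = t)
    (hRvright : ∀ z ∈ (fun t => R t v) '' I,
      Rvinv z ∈ I ∧ R (Rvinv z) v = z)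
    (ψ : ℝ → ℝ) (hψ : ∀ z : ℝ, ψ z = L (Rvinv z) v) :
    (∀ z ∈ (fun t => R t v) '' I, ψ z ∈ (fun t => R t v) '' I) ∧
    ψ v = v ∧
    (∀ ξ ∈ (fun t => R t v) '' I, ξ ≠ v →
      (StrictMono (fun n : ℕ => ψ^[n] ξ) ∨ StrictAnti (fun n : ℕ => ψ^[n] ξ)) ∧
      Tendsto (fun n : ℕ => ψ^[n] ξ) atTop (𝓝 v)) :=
  psi_orbit_converges_general I hIc L R hLc1 hLm1 hLmean hRc1 hRm1 hRmean v hv hlt hgt Rvinv hRvleft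
    hRvright ψ hψ
end

section
/- Let L, R : I×I → ℝ be continuous strictly monotone means, ψ_v := L_v ∘ R_v⁻¹ with L_v(t)=L(t,v), R_v(t)=R(t,v). For any fixed u ∈ I, the function v ↦ ψ_v(u) = L(R_v⁻¹(u), v) is continuous on D(u) = {v ∈ I : u ∈ R_v(I)}. -/
/-!
If `a < R_{v₀}⁻¹(u) < b`, then `R(a, v₀) < u < R(b, v₀)`, and by continuity of `R(a, ·)` and
`R(b, ·)` these strict inequalities persist for `v` near `v₀`; monotonicity of `R_v` then traps
`R_v⁻¹(u)` in `(a, b)`, so `v ↦ R_v⁻¹(u)` is continuous. Composing with `L`, the value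
`L(R_v⁻¹(u), v)` is squeezed between `L(a, v)` and `L(b, v)`, which are close to `L(a, v₀)` and
`L(b, v₀)`, themselves close to `L(R_{v₀}⁻¹(u), v₀)` once `a` and `b` are close to `R_{v₀}⁻¹(u)`.
-/

open Filter Topology

section SeparatelyContinuous

variable {Y : Type*} [TopologicalSpace Y] {F : ℝ → Y → ℝ} {g : Y → ℝ} {s : Set ℝ}
  {D : Set Y} {y₀ : Y}

theorem continuousWithinAt_of_apply_eq_of_strictMonoOn {c : ℝ} (hs : s ∈ 𝓝 (g y₀))
    (hy₀ : y₀ ∈ D) (hmono : ∀ y ∈ D, StrictMonoOn (F · y) s)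
    (hcont : ∀ x ∈ s, ContinuousWithinAt (F x) D y₀)
    (hg : ∀ y ∈ D, g y ∈ s ∧ F (g y) y = c) :
    ContinuousWithinAt g D y₀ := by
  obtain ⟨hg₀s, hg₀⟩ := hg y₀ hy₀
  refine tendsto_order.2 ⟨fun a ha => ?_, fun b hb => ?_⟩
  · obtain ⟨a', ⟨haa', ha'g⟩, ha's⟩ :=
      (Eventually.and (Ioo_mem_nhdsLT ha) (nhdsWithin_le_nhds hs)).exists
    have hFa' : F a' y₀ < c := hg₀ ▸ hmono y₀ hy₀ ha's hg₀s ha'g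
    filter_upwards [(hcont a' ha's).eventually_lt_const hFa', self_mem_nhdsWithin]
      with y hFy hy
    obtain ⟨hgy, hFgy⟩ := hg y hy
    exact haa'.trans (((hmono y hy).lt_iff_lt ha's hgy).1 (hFgy ▸ hFy))
  · obtain ⟨b', ⟨hgb', hb'b⟩, hb's⟩ :=
      (Eventually.and (Ioo_mem_nhdsGT hb) (nhdsWithin_le_nhds hs)).exists
    have hFb' : c < F b' y₀ := hg₀ ▸ hmono y₀ hy₀ hg₀s hb's hgb'
    filter_upwards [(hcont b' hb's).eventually_const_lt hFb', self_mem_nhdsWithin]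
      with y hFy hy
    obtain ⟨hgy, hFgy⟩ := hg y hy
    exact (((hmono y hy).lt_iff_lt hgy hb's).1 (hFgy ▸ hFy)).trans hb'b

theorem continuousWithinAt_comp_of_monotoneOn (hs : s ∈ 𝓝 (g y₀))
    (hmono : ∀ y ∈ D, MonotoneOn (F · y) s) (hcont₁ : ContinuousAt (F · y₀) (g y₀))
    (hcont₂ : ∀ x ∈ s, ContinuousWithinAt (F x) D y₀)
    (hg : ContinuousWithinAt g D y₀) (hgs : ∀ y ∈ D, g y ∈ s) :
    ContinuousWithinAt (fun y => F (g y) y) D y₀ := by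
  refine tendsto_order.2 ⟨fun c hc => ?_, fun c hc => ?_⟩
  · obtain ⟨a, ⟨hca, has⟩, hag⟩ := (Eventually.and
      (nhdsWithin_le_nhds ((hcont₁.eventually_const_lt hc).and hs))
      (self_mem_nhdsWithin : Set.Iio (g y₀) ∈ 𝓝[<] g y₀)).exists
    filter_upwards [(hcont₂ a has).eventually_const_lt hca, hg.eventually_const_lt hag,
      self_mem_nhdsWithin] with y hFy hgy hy
    exact hFy.trans_le (hmono y hy has (hgs y hy) hgy.le)
  · obtain ⟨b, ⟨hcb, hbs⟩, hgb⟩ := (Eventually.and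
      (nhdsWithin_le_nhds ((hcont₁.eventually_lt_const hc).and hs))
      (self_mem_nhdsWithin : Set.Ioi (g y₀) ∈ 𝓝[>] g y₀)).exists
    filter_upwards [(hcont₂ b hbs).eventually_lt_const hcb, hg.eventually_lt_const hgb,
      self_mem_nhdsWithin] with y hFy hgy hy
    exact (hmono y hy (hgs y hy) hbs hgy.le).trans_lt hFy

end SeparatelyContinuous

theorem psi_continuous_in_v_general (I : Set ℝ) (hI : IsOpen I) (L R : ℝ → ℝ → ℝ)
    (hLc1 : ∀ y ∈ I, ContinuousOn (fun x => L x y) I)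
    (hLc2 : ∀ x ∈ I, ContinuousOn (fun y => L x y) I)
    (hLm1 : ∀ y ∈ I, StrictMonoOn (fun x => L x y) I)
    (hRc2 : ∀ x ∈ I, ContinuousOn (fun y => R x y) I)
    (hRm1 : ∀ y ∈ I, StrictMonoOn (fun x => R x y) I)
    (Rinv : ℝ → ℝ → ℝ)
    (hRright : ∀ v ∈ I, ∀ z ∈ (fun t => R t v) '' I,
      Rinv z v ∈ I ∧ R (Rinv z v) v = z)
    (u : ℝ) :
    ContinuousOn (fun v => L (Rinv u v) v) {v ∈ I | u ∈ (fun t => R t v) '' I} := by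
  intro v₀ hv₀
  have hRinv : ∀ v ∈ {v ∈ I | u ∈ (fun t => R t v) '' I}, Rinv u v ∈ I ∧ R (Rinv u v) v = u :=
    fun v hv => hRright v hv.1 u hv.2
  have hs : I ∈ 𝓝 (Rinv u v₀) := hI.mem_nhds (hRinv v₀ hv₀).1
  have hv₀I : I ∈ 𝓝 v₀ := hI.mem_nhds hv₀.1
  have hRinv_cont : ContinuousWithinAt (fun v => Rinv u v) _ v₀ :=
    continuousWithinAt_of_apply_eq_of_strictMonoOn hs hv₀ (fun v hv => hRm1 v hv.1)
      (fun x hx => ((hRc2 x hx).continuousAt hv₀I).continuousWithinAt) hRinv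
  exact continuousWithinAt_comp_of_monotoneOn hs (fun v hv => (hLm1 v hv.1).monotoneOn)
    ((hLc1 v₀ hv₀.1).continuousAt hs)
    (fun x hx => ((hLc2 x hx).continuousAt hv₀I).continuousWithinAt) hRinv_cont
    (fun v hv => (hRinv v hv).1)

/-- Lemma: for fixed `u ∈ I`, the map `v ↦ ψ_v(u) = L(R_v⁻¹(u), v)` is
continuous on `D(u)`. -/
theorem psi_continuous_in_v (I : Set ℝ) (hI : IsOpen I) (hIne : I.Nonempty)
    (hIc : I.OrdConnected) (L R : ℝ → ℝ → ℝ)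
    (hLc1 : ∀ y ∈ I, ContinuousOn (fun x => L x y) I)
    (hLc2 : ∀ x ∈ I, ContinuousOn (fun y => L x y) I)
    (hLm1 : ∀ y ∈ I, StrictMonoOn (fun x => L x y) I)
    (hLm2 : ∀ x ∈ I, StrictMonoOn (fun y => L x y) I)
    (hLmean : ∀ x ∈ I, ∀ y ∈ I, min x y ≤ L x y ∧ L x y ≤ max x y)
    (hRc1 : ∀ y ∈ I, ContinuousOn (fun x => R x y) I)
    (hRc2 : ∀ x ∈ I, ContinuousOn (fun y => R x y) I)
    (hRm1 : ∀ y ∈ I, StrictMonoOn (fun x => R x y) I)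
    (hRm2 : ∀ x ∈ I, StrictMonoOn (fun y => R x y) I)
    (hRmean : ∀ x ∈ I, ∀ y ∈ I, min x y ≤ R x y ∧ R x y ≤ max x y)
    (Rinv : ℝ → ℝ → ℝ)
    (hRleft : ∀ v ∈ I, ∀ t ∈ I, Rinv (R t v) v = t)
    (hRright : ∀ v ∈ I, ∀ z ∈ (fun t => R t v) '' I,
      Rinv z v ∈ I ∧ R (Rinv z v) v = z)
    (u : ℝ) (hu : u ∈ I) :
    ContinuousOn (fun v => L (Rinv u v) v) {v ∈ I | u ∈ (fun t => R t v) '' I} :=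
  psi_continuous_in_v_general I hI L R hLc1 hLc2 hLm1 hRc2 hRm1 Rinv hRright u
end

section
/- Local-to-global extension: Let M : I×I → ℝ be a continuous strictly monotone mean and Φ : I → ℝ a continuous strictly monotone function such that M(x,y) = A_Φ(M(x,M(x,y)), M(M(x,y),y)) for all x,y ∈ I (iterative quasi-arithmeticity). If for every p ∈ I there exists an open neighborhood U_p ⊆ I of p such that M = A_Φ on U_p × U_p, then M = A_Φ on all of I × I. -/
/-!
By iterative quasi-arithmeticity the defect `Φ (M u v) - (Φ u + Φ v) / 2` is additive along the
split `(u, v) ↦ (u, m), (m, v)` with `m = M u v`, so it vanishes at a pair once it vanishes at both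
halves. On the compact interval `[x, y]` the local hypothesis yields a Lebesgue number `δ` below
which the defect vanishes. Separate continuity and monotonicity make `M` jointly continuous, so by
compactness and strictness splitting a pair at distance at least `δ` shortens both halves by a
uniform `c > 0`; induction on the distance then shows that the defect vanishes everywhere.
-/

open Filter Topology Set Function

section JointContinuity

variable {α β γ : Type*}
  [TopologicalSpace α] [LinearOrder α] [OrderTopology α] [DenselyOrdered α]
  [TopologicalSpace β] [LinearOrder β] [OrderTopology β] [DenselyOrdered β]
  [TopologicalSpace γ] [LinearOrder γ] [OrderTopology γ]
  {s : Set α} {t : Set β} {f : α → β → γ}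

theorem eventually_lt_apply_of_monotoneOn [NoMinOrder α] [NoMinOrder β]
    (hs : IsOpen s) (ht : IsOpen t)
    (hf₁ : ∀ y ∈ t, ContinuousOn (f · y) s) (hf₂ : ∀ x ∈ s, ContinuousOn (f x) t)
    (hm₁ : ∀ y ∈ t, MonotoneOn (f · y) s) (hm₂ : ∀ x ∈ s, MonotoneOn (f x) t)
    {x : α} {y : β} (hx : x ∈ s) (hy : y ∈ t) {c : γ} (hc : c < f x y) :
    ∀ᶠ p in 𝓝 (x, y), c < f p.1 p.2 := by
  obtain ⟨x', hx'x, hcx', hx's⟩ :=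
    (((hf₁ y hy).continuousAt (hs.mem_nhds hx)).eventually (lt_mem_nhds hc)).and
      (hs.mem_nhds hx) |>.exists_lt
  obtain ⟨y', hy'y, hcy', hy't⟩ :=
    (((hf₂ x' hx's).continuousAt (ht.mem_nhds hy)).eventually (lt_mem_nhds hcx')).and
      (ht.mem_nhds hy) |>.exists_lt
  filter_upwards [((eventually_gt_nhds hx'x).and (hs.mem_nhds hx)).prodMk_nhds
    ((eventually_gt_nhds hy'y).and (ht.mem_nhds hy))] with p ⟨⟨hxp, hps⟩, hyp, hpt⟩
  calc c < f x' y' := hcy'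
    _ ≤ f x' p.2 := hm₂ x' hx's hy't hpt hyp.le
    _ ≤ f p.1 p.2 := hm₁ p.2 hpt hx's hps hxp.le

theorem continuousOn_uncurry_of_monotoneOn [NoMinOrder α] [NoMaxOrder α] [NoMinOrder β]
    [NoMaxOrder β] (hs : IsOpen s) (ht : IsOpen t)
    (hf₁ : ∀ y ∈ t, ContinuousOn (f · y) s) (hf₂ : ∀ x ∈ s, ContinuousOn (f x) t)
    (hm₁ : ∀ y ∈ t, MonotoneOn (f · y) s) (hm₂ : ∀ x ∈ s, MonotoneOn (f x) t) :
    ContinuousOn (uncurry f) (s ×ˢ t) := by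
  rintro ⟨x, y⟩ ⟨hx, hy⟩
  refine (tendsto_order.2 ⟨fun c hc => ?_, fun c hc => ?_⟩).mono_left nhdsWithin_le_nhds
  · exact eventually_lt_apply_of_monotoneOn hs ht hf₁ hf₂ hm₁ hm₂ hx hy hc
  -- the upper bound is the lower bound for the order duals
  · exact eventually_lt_apply_of_monotoneOn (α := αᵒᵈ) (β := βᵒᵈ) (γ := γᵒᵈ) hs ht hf₁ hf₂
      (fun y hy => (hm₁ y hy).dual) (fun x hx => (hm₂ x hx).dual) hx hy hc

end JointContinuity

section Splitting

variable {X : Type*}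

theorem lebesgue_number_lemma_of_metric_rel [PseudoMetricSpace X] {K : Set X} (hK : IsCompact K)
    {R : X → X → Prop} (hR : ∀ p ∈ K, ∃ U, IsOpen U ∧ p ∈ U ∧ ∀ u ∈ U, ∀ v ∈ U, R u v) :
    ∃ δ > 0, ∀ u ∈ K, ∀ v, dist u v < δ → R u v := by
  choose! U hUo hpU hUR using hR
  obtain ⟨δ, hδ, hball⟩ := lebesgue_number_lemma_of_metric (c := fun p : K => U p) hK
    (fun p => hUo p p.2) (fun p hp => mem_iUnion.2 ⟨⟨p, hp⟩, hpU p hp⟩)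
  refine ⟨δ, hδ, fun u hu v huv => ?_⟩
  obtain ⟨p, hp⟩ := hball u hu
  exact hUR p p.2 u (hp (Metric.mem_ball_self hδ)) v (hp (Metric.mem_ball'.2 huv))

theorem IsCompact.exists_pos_le_dist_of_ne [MetricSpace X] {K : Set X} (hK : IsCompact K)
    {m : X → X → X} (hm : ContinuousOn (uncurry m) (K ×ˢ K))
    (hne : ∀ u ∈ K, ∀ v ∈ K, u ≠ v → m u v ≠ u ∧ m u v ≠ v) {δ : ℝ} (hδ : 0 < δ) :
    ∃ c > 0, ∀ u ∈ K, ∀ v ∈ K, δ ≤ dist u v → c ≤ dist u (m u v) ∧ c ≤ dist (m u v) v := by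
  set S := {p ∈ K ×ˢ K | δ ≤ dist p.1 p.2}
  have hS : IsCompact S := (hK.prod hK).inter_right (isClosed_le continuous_const continuous_dist)
  have hg : ContinuousOn
      (fun p : X × X => min (dist p.1 (uncurry m p)) (dist (uncurry m p) p.2)) S := by
    have : ContinuousOn (uncurry m) S := hm.mono (sep_subset _ _)
    fun_prop
  obtain ⟨c, hc, hcS⟩ := hS.exists_forall_le' hg (a := 0) fun p ⟨⟨hp₁, hp₂⟩, hpδ⟩ => by
    have hp : p.1 ≠ p.2 := dist_pos.1 (hδ.trans_le hpδ)
    obtain ⟨hm₁, hm₂⟩ := hne _ hp₁ _ hp₂ hp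
    exact lt_min (dist_pos.2 hm₁.symm) (dist_pos.2 hm₂)
  exact ⟨c, hc, fun u hu v hv huv => le_min_iff.1 (hcS (u, v) ⟨⟨hu, hv⟩, huv⟩)⟩

theorem forall_of_split [PseudoMetricSpace X] {K : Set X} {m : X → X → X} {P : X → X → Prop}
    {δ c : ℝ} (hc : 0 < c) (hmK : ∀ u ∈ K, ∀ v ∈ K, m u v ∈ K)
    (hm_dist : ∀ u ∈ K, ∀ v ∈ K, dist u (m u v) + dist (m u v) v = dist u v)
    (hm_far : ∀ u ∈ K, ∀ v ∈ K, δ ≤ dist u v → c ≤ dist u (m u v) ∧ c ≤ dist (m u v) v)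
    (hP_near : ∀ u ∈ K, ∀ v ∈ K, dist u v < δ → P u v)
    (hP_split : ∀ u ∈ K, ∀ v ∈ K, P u (m u v) → P (m u v) v → P u v) :
    ∀ u ∈ K, ∀ v ∈ K, P u v := by
  have key (n : ℕ) : ∀ u ∈ K, ∀ v ∈ K, dist u v < δ + n * c → P u v := by
    induction n with
    | zero => simpa using hP_near
    | succ n ih =>
      intro u hu v hv huv
      by_cases hnear : dist u v < δ
      · exact hP_near u hu v hv hnear
      obtain ⟨h₁, h₂⟩ := hm_far u hu v hv (not_lt.1 hnear)
      have hsum := hm_dist u hu v hv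
      push_cast at huv
      exact hP_split u hu v hv (ih u hu _ (hmK u hu v hv) (by linarith))
        (ih _ (hmK u hu v hv) v hv (by linarith))
  intro u hu v hv
  obtain ⟨n, hn⟩ := exists_nat_gt ((dist u v - δ) / c)
  exact key n u hu v hv (by rw [div_lt_iff₀ hc] at hn; linarith)

end Splitting

theorem ne_left_and_ne_right_of_strictMonoOn {α : Type*} [LinearOrder α] {s : Set α}
    {M : α → α → α} (hm₁ : ∀ y ∈ s, StrictMonoOn (M · y) s)
    (hm₂ : ∀ x ∈ s, StrictMonoOn (M x) s) (hdiag : ∀ x ∈ s, M x x = x)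
    {u v : α} (hu : u ∈ s) (hv : v ∈ s) (huv : u ≠ v) : M u v ≠ u ∧ M u v ≠ v := by
  rcases huv.lt_or_gt with h | h
  · have h₁ := hm₂ u hu hu hv h
    have h₂ := hm₁ v hv hu hv h
    simp only [hdiag u hu, hdiag v hv] at h₁ h₂
    exact ⟨h₁.ne', h₂.ne⟩
  · have h₁ := hm₂ u hu hv hu h
    have h₂ := hm₁ v hv hv hu h
    simp only [hdiag u hu, hdiag v hv] at h₁ h₂
    exact ⟨h₁.ne, h₂.ne'⟩

theorem add_div_two_mem_image {I : Set ℝ} (hI : I.OrdConnected) {Φ : ℝ → ℝ}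
    (hΦ : ContinuousOn Φ I) {u v : ℝ} (hu : u ∈ I) (hv : v ∈ I) :
    (Φ u + Φ v) / 2 ∈ Φ '' I :=
  image_mono (hI.uIcc_subset hu hv) <| intermediate_value_uIcc (hΦ.mono (hI.uIcc_subset hu hv))
    (by rw [mem_uIcc]; rcases le_total (Φ u) (Φ v) with h | h <;> [left; right] <;>
      constructor <;> linarith)

theorem eq_iff_of_leftInvOn_of_rightInvOn {α β : Type*} {f : α → β} {g : β → α} {s : Set α}
    {t : Set β} (hgf : LeftInvOn g f s) (hfg : RightInvOn g f t) {x : α} {y : β} (hx : x ∈ s)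
    (hy : y ∈ t) : x = g y ↔ f x = y :=
  ⟨fun h => h ▸ hfg hy, fun h => h ▸ (hgf hx).symm⟩

theorem exists_pos_le_dist_of_strictMonoOn_of_mean {I : Set ℝ} (hI : IsOpen I)
    (hIc : I.OrdConnected) {M : ℝ → ℝ → ℝ}
    (hMc₁ : ∀ y ∈ I, ContinuousOn (M · y) I) (hMc₂ : ∀ x ∈ I, ContinuousOn (M x) I)
    (hMm₁ : ∀ y ∈ I, StrictMonoOn (M · y) I) (hMm₂ : ∀ x ∈ I, StrictMonoOn (M x) I)
    (hdiag : ∀ x ∈ I, M x x = x) {x y δ : ℝ} (hx : x ∈ I) (hy : y ∈ I) (hδ : 0 < δ) :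
    ∃ c > 0, ∀ u ∈ uIcc x y, ∀ v ∈ uIcc x y,
      δ ≤ dist u v → c ≤ dist u (M u v) ∧ c ≤ dist (M u v) v := by
  have hKI : uIcc x y ⊆ I := hIc.uIcc_subset hx hy
  have hMcont : ContinuousOn (uncurry M) (uIcc x y ×ˢ uIcc x y) :=
    (continuousOn_uncurry_of_monotoneOn hI hI hMc₁ hMc₂ (fun y hy => (hMm₁ y hy).monotoneOn)
      (fun x hx => (hMm₂ x hx).monotoneOn)).mono (prod_mono hKI hKI)
  exact isCompact_uIcc.exists_pos_le_dist_of_ne hMcont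
    (fun u hu v hv => ne_left_and_ne_right_of_strictMonoOn hMm₁ hMm₂ hdiag (hKI hu) (hKI hv)) hδ

theorem local_to_global_quasiArithmetic_general (I : Set ℝ) (hI : IsOpen I)
    (hIc : I.OrdConnected) (M : ℝ → ℝ → ℝ)
    (hMc1 : ∀ y ∈ I, ContinuousOn (fun x => M x y) I)
    (hMc2 : ∀ x ∈ I, ContinuousOn (fun y => M x y) I)
    (hMm1 : ∀ y ∈ I, StrictMonoOn (fun x => M x y) I)
    (hMm2 : ∀ x ∈ I, StrictMonoOn (fun y => M x y) I)
    (hMmean : ∀ x ∈ I, ∀ y ∈ I, min x y ≤ M x y ∧ M x y ≤ max x y)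
    (Φ Φinv : ℝ → ℝ)
    (hΦc : ContinuousOn Φ I)
    (hleft : ∀ x ∈ I, Φinv (Φ x) = x)
    (hright : ∀ z ∈ Φ '' I, Φinv z ∈ I ∧ Φ (Φinv z) = z)
    (A : ℝ → ℝ → ℝ) (hA : ∀ x y : ℝ, A x y = Φinv ((Φ x + Φ y) / 2))
    (hIQA : ∀ x ∈ I, ∀ y ∈ I, M x y = A (M x (M x y)) (M (M x y) y))
    (hloc : ∀ p ∈ I, ∃ U : Set ℝ, IsOpen U ∧ p ∈ U ∧ U ⊆ I ∧
      ∀ x ∈ U, ∀ y ∈ U, M x y = A x y) :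
    ∀ x ∈ I, ∀ y ∈ I, M x y = A x y := by
  have hMI : ∀ u ∈ I, ∀ v ∈ I, M u v ∈ I := fun u hu v hv =>
    hIc.uIcc_subset hu hv (hMmean u hu v hv)
  have hA_iff : ∀ u ∈ I, ∀ v ∈ I, ∀ z ∈ I, z = A u v ↔ Φ z = (Φ u + Φ v) / 2 :=
    fun u hu v hv z hz => hA u v ▸ eq_iff_of_leftInvOn_of_rightInvOn hleft
      (fun w hw => (hright w hw).2) hz (add_div_two_mem_image hIc hΦc hu hv)
  have hdiag : ∀ x ∈ I, M x x = x := fun x hx =>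
    le_antisymm_iff.2 (by simpa using (hMmean x hx x hx).symm)
  intro x hx y hy
  set K := uIcc x y
  have hKI : K ⊆ I := hIc.uIcc_subset hx hy
  have hM_uIcc : ∀ u ∈ K, ∀ v ∈ K, M u v ∈ uIcc u v := fun u hu v hv =>
    hMmean u (hKI hu) v (hKI hv)
  obtain ⟨δ, hδ, hMA_near⟩ := lebesgue_number_lemma_of_metric_rel isCompact_uIcc
    (R := fun u v => M u v = A u v) fun p hp => by
      obtain ⟨U, hU, hpU, -, hMA⟩ := hloc p (hKI hp)
      exact ⟨U, hU, hpU, hMA⟩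
  obtain ⟨c, hc, hM_far⟩ :=
    exists_pos_le_dist_of_strictMonoOn_of_mean hI hIc hMc1 hMc2 hMm1 hMm2 hdiag hx hy hδ
  refine (hA_iff x hx y hy _ (hMI x hx y hy)).2 <|
    forall_of_split (P := fun u v => Φ (M u v) = (Φ u + Φ v) / 2) hc
      (fun u hu v hv => ordConnected_uIcc.uIcc_subset hu hv (hM_uIcc u hu v hv))
      (fun u hu v hv => dist_add_dist_of_mem_segment (segment_eq_uIcc u v ▸ hM_uIcc u hu v hv))
      hM_far ?_ ?_ x left_mem_uIcc y right_mem_uIcc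
  · intro u hu v hv huv
    exact (hA_iff u (hKI hu) v (hKI hv) _ (hMI u (hKI hu) v (hKI hv))).1 (hMA_near u hu v huv)
  · intro u hu v hv h₁ h₂
    have hm := hMI u (hKI hu) v (hKI hv)
    have hm_mid := (hA_iff _ (hMI u (hKI hu) _ hm) _ (hMI _ hm v (hKI hv)) _ hm).1
      (hIQA u (hKI hu) v (hKI hv))
    linarith

/-- Local-to-global extension theorem: an iteratively quasi-arithmetic,
continuous, strictly monotone mean that locally coincides with `A_Φ` near
every diagonal point coincides with `A_Φ` globally. -/
theorem local_to_global_quasiArithmetic (I : Set ℝ) (hI : IsOpen I)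
    (hIne : I.Nonempty) (hIc : I.OrdConnected) (M : ℝ → ℝ → ℝ)
    (hMc1 : ∀ y ∈ I, ContinuousOn (fun x => M x y) I)
    (hMc2 : ∀ x ∈ I, ContinuousOn (fun y => M x y) I)
    (hMm1 : ∀ y ∈ I, StrictMonoOn (fun x => M x y) I)
    (hMm2 : ∀ x ∈ I, StrictMonoOn (fun y => M x y) I)
    (hMmean : ∀ x ∈ I, ∀ y ∈ I, min x y ≤ M x y ∧ M x y ≤ max x y)
    (Φ Φinv : ℝ → ℝ)
    (hΦc : ContinuousOn Φ I)
    (hΦm : StrictMonoOn Φ I ∨ StrictAntiOn Φ I)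
    (hleft : ∀ x ∈ I, Φinv (Φ x) = x)
    (hright : ∀ z ∈ Φ '' I, Φinv z ∈ I ∧ Φ (Φinv z) = z)
    (A : ℝ → ℝ → ℝ) (hA : ∀ x y : ℝ, A x y = Φinv ((Φ x + Φ y) / 2))
    (hIQA : ∀ x ∈ I, ∀ y ∈ I, M x y = A (M x (M x y)) (M (M x y) y))
    (hloc : ∀ p ∈ I, ∃ U : Set ℝ, IsOpen U ∧ p ∈ U ∧ U ⊆ I ∧
      ∀ x ∈ U, ∀ y ∈ U, M x y = A x y) :
    ∀ x ∈ I, ∀ y ∈ I, M x y = A x y :=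
  local_to_global_quasiArithmetic_general I hI hIc M hMc1 hMc2 hMm1 hMm2 hMmean Φ Φinv hΦc hleft
    hright A hA hIQA hloc
end
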